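/- For every integer k ≥ 2 and every ε with 0 < ε < 1/2 there exists a unary MA-PostQFA M such that: a(c,x)+r(c,x) > 0 for all certificates and inputs; for every i ≥ 0, on certificate a^i and input a^(i^k) the acceptance probability of M is at least 1−ε; and for every n that is not a k-th power and every i ≥ 0, on certificate a^i and input a^n the rejection probability of M is at least 1−ε. Hence M verifies UPOLY(k) = { a^(i^k) : i ≥ 0 } with bounded error using certificates of length n^(1/k) for members. -/

import Mathlib

open Matrix

/-- A superoperator on `ℂ^m`: a finite family of `m×m` complex matrices `E_1,…,E_k`
with `∑ j, E_jᴴ E_j = I`. -/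
structure Superop (m : ℕ) where
  k : ℕ
  E : Fin k → Matrix (Fin m) (Fin m) ℂ
  valid : ∑ j, (E j)ᴴ * E j = 1

/-- Action of a superoperator on a density matrix: `ρ ↦ ∑ j, E_j ρ E_jᴴ`. -/
noncomputable def Superop.app {m : ℕ} (S : Superop m) (ρ : Matrix (Fin m) (Fin m) ℂ) :
    Matrix (Fin m) (Fin m) ℂ :=
  ∑ j, S.E j * ρ * (S.E j)ᴴ

/-- The initial density matrix `e₁ e₁†`. -/
def rho0 (m : ℕ) : Matrix (Fin m) (Fin m) ℂ :=
  Matrix.of fun j j' => if j.val = 0 ∧ j'.val = 0 then 1 else 0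

/-- An MA-PostQFA whose certificate and input symbols range over the type `Sym`:
superoperators for the markers `◐, ◑, ¢, $` and for each symbol, together with disjoint
sets of postselecting accepting and rejecting states. -/
structure MAPostQFA (Sym : Type) where
  m : ℕ
  Eopen : Superop m
  Eclose : Superop m
  Ecent : Superop m
  Edollar : Superop m
  Esym : Sym → Superop m
  Qacc : Finset (Fin m)
  Qrej : Finset (Fin m)
  disj : Disjoint Qacc Qrej

namespace MAPostQFA

variable {Sym : Type}

/-- The final density matrix on certificate `c` and input `x`: apply
`E_◐, E_{c_1}, …, E_{c_k}, E_◑, E_¢, E_{x_1}, …, E_{x_l}, E_$` in order to `ρ₀`. -/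
noncomputable def finalRho (M : MAPostQFA Sym) (c x : List Sym) : Matrix (Fin M.m) (Fin M.m) ℂ :=
  M.Edollar.app <|
    x.foldl (fun ρ s => (M.Esym s).app ρ) <|
      M.Ecent.app <| M.Eclose.app <|
        c.foldl (fun ρ s => (M.Esym s).app ρ) (M.Eopen.app (rho0 M.m))

/-- `a(c,x)`: total final weight on the postselecting accepting states. -/
noncomputable def aPr (M : MAPostQFA Sym) (c x : List Sym) : ℝ :=
  ∑ j ∈ M.Qacc, (M.finalRho c x j j).re

/-- `r(c,x)`: total final weight on the postselecting rejecting states. -/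
noncomputable def rPr (M : MAPostQFA Sym) (c x : List Sym) : ℝ :=
  ∑ j ∈ M.Qrej, (M.finalRho c x j j).re

/-- Acceptance probability `a/(a+r)` after postselection. -/
noncomputable def accProb (M : MAPostQFA Sym) (c x : List Sym) : ℝ :=
  M.aPr c x / (M.aPr c x + M.rPr c x)

/-- Rejection probability `r/(a+r)` after postselection. -/
noncomputable def rejProb (M : MAPostQFA Sym) (c x : List Sym) : ℝ :=
  M.rPr c x / (M.aPr c x + M.rPr c x)

end MAPostQFA

/-! The verifier runs a linear dynamics on `ℂ^(k+2)` whose state stays pure up to a positive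
scalar, which postselection ignores. Any matrix `M` becomes a superoperator on `ℂ^(k+2) ⊕ ℂ^(k+2)`:
scale it to a contraction `c • M`, complete it by a defect `B` with
`(c • M)ᴴ (c • M) + Bᴴ B = 1`, let the first block evolve by `c • M` and dump the lost weight
into the second block.

On the certificate `a^i` the Pascal matrix `(j choose l)` sends the moment vector `(x^j)_j` to
`((x + 1)^j)_j`, so from the initial basis vector it reaches `(1, i, …, i^k, …)`. The marker `¢`
turns this into `(1, -i^k, 0, …)`, and on its first two coordinates the Pascal matrix is the
counter `(u, v) ↦ (u, u + v)`, so after `a^n` the state starts with `(1, n - i^k)`. Finally `$`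
puts the amplitude `ε` on the accepting state: `a : r = ε² : (n - i^k)²`, which is `1 : 0` on
members and at most `ε² : 1` otherwise. -/

theorem CStarAlgebra.exists_star_mul_add_star_mul_eq_one {A : Type*} [CStarAlgebra A]
    [PartialOrder A] [StarOrderedRing A] {a : A} (ha : ‖a‖ ≤ 1) :
    ∃ b : A, star a * a + star b * b = 1 := by
  have h : star a * a ≤ 1 :=
    calc star a * a ≤ algebraMap ℝ A (‖a‖ ^ 2) := CStarAlgebra.star_mul_le_algebraMap_norm_sq
      _ ≤ algebraMap ℝ A 1 := algebraMap_mono A (pow_le_one₀ (norm_nonneg a) ha)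
      _ = 1 := map_one _
  obtain ⟨b, hb⟩ := CStarAlgebra.nonneg_iff_eq_star_mul_self.1 (sub_nonneg.2 h)
  exact ⟨b, by rw [← hb, add_sub_cancel]⟩

namespace Matrix

variable {n : Type*} [Fintype n] [DecidableEq n]

open scoped MatrixOrder Matrix.Norms.L2Operator in
theorem exists_smul_conjTranspose_mul_add_eq_one (M : Matrix n n ℂ) :
    ∃ c : ℝ, 0 < c ∧ ∃ B : Matrix n n ℂ, (c • M)ᴴ * (c • M) + Bᴴ * B = 1 := by
  have hc : 0 < (‖M‖ + 1)⁻¹ := by positivity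
  refine ⟨_, hc, CStarAlgebra.exists_star_mul_add_star_mul_eq_one ?_⟩
  rw [norm_smul, Real.norm_of_nonneg hc.le, inv_mul_le_one₀ (by positivity)]
  linarith

def dilation (A B : Matrix n n ℂ) : Fin 3 → Matrix (n ⊕ n) (n ⊕ n) ℂ :=
  ![fromBlocks A 0 0 0, fromBlocks 0 0 B 0, fromBlocks 0 0 0 1]

theorem sum_dilation_conjTranspose_mul {A B : Matrix n n ℂ} (h : Aᴴ * A + Bᴴ * B = 1) :
    ∑ j, (dilation A B j)ᴴ * dilation A B j = 1 := by
  simp [Fin.sum_univ_three, dilation, fromBlocks_conjTranspose, fromBlocks_multiply,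
    fromBlocks_add, h, fromBlocks_one]

theorem sum_dilation_mul_mul_conjTranspose (A B ρ γ : Matrix n n ℂ) :
    ∑ j, dilation A B j * fromBlocks ρ 0 0 γ * (dilation A B j)ᴴ =
      fromBlocks (A * ρ * Aᴴ) 0 0 (B * ρ * Bᴴ + γ) := by
  simp [Fin.sum_univ_three, dilation, fromBlocks_conjTranspose, fromBlocks_multiply,
    fromBlocks_add]

theorem smul_mul_smul_vecMulVec_mul_conjTranspose (c z : ℝ) (M : Matrix n n ℂ) (ψ : n → ℂ) :
    (c • M) * (z • vecMulVec ψ (star ψ)) * (c • M)ᴴ =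
      (z * c ^ 2) • vecMulVec (M *ᵥ ψ) (star (M *ᵥ ψ)) := by
  simp [conjTranspose_smul, mul_vecMulVec, vecMulVec_mul, star_mulVec, smul_smul]
  ring_nf

end Matrix

namespace Superop

section Kraus

variable {m : ℕ} {n : Type*} [Fintype n] [DecidableEq n]

noncomputable def ofKraus (e : n ≃ Fin m) {r : ℕ} (K : Fin r → Matrix n n ℂ)
    (hK : ∑ j, (K j)ᴴ * K j = 1) : Superop m where
  k := r
  E j := reindex e e (K j)
  valid := by
    rw [← map_one (reindexAlgEquiv ℂ ℂ e), ← hK, map_sum]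
    refine Finset.sum_congr rfl fun j _ => ?_
    rw [map_mul, coe_reindexAlgEquiv, conjTranspose_reindex]

theorem ofKraus_app (e : n ≃ Fin m) {r : ℕ} (K : Fin r → Matrix n n ℂ)
    (hK : ∑ j, (K j)ᴴ * K j = 1) (ρ : Matrix n n ℂ) :
    (ofKraus e K hK).app (reindex e e ρ) = reindex e e (∑ j, K j * ρ * (K j)ᴴ) := by
  rw [app, ← coe_reindexAlgEquiv ℂ ℂ, map_sum]
  refine Finset.sum_congr rfl fun j _ => ?_
  simp only [ofKraus, map_mul, coe_reindexAlgEquiv, conjTranspose_reindex]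

end Kraus

variable {d : ℕ}

noncomputable def blockDiag (ρ γ : Matrix (Fin d) (Fin d) ℂ) :
    Matrix (Fin (d + d)) (Fin (d + d)) ℂ :=
  reindex finSumFinEquiv finSumFinEquiv (fromBlocks ρ 0 0 γ)

noncomputable def ofMatrix (M : Matrix (Fin d) (Fin d) ℂ) : Superop (d + d) :=
  let h := M.exists_smul_conjTranspose_mul_add_eq_one
  ofKraus finSumFinEquiv (dilation (h.choose • M) h.choose_spec.2.choose)
    (sum_dilation_conjTranspose_mul h.choose_spec.2.choose_spec)

theorem exists_ofMatrix_app (M : Matrix (Fin d) (Fin d) ℂ) :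
    ∃ c : ℝ, 0 < c ∧ ∀ ρ γ, ∃ γ',
      (ofMatrix M).app (blockDiag ρ γ) = blockDiag ((c • M) * ρ * (c • M)ᴴ) γ' :=
  let h := M.exists_smul_conjTranspose_mul_add_eq_one
  ⟨h.choose, h.choose_spec.1, fun ρ γ => ⟨_, by
    rw [ofMatrix, blockDiag, ofKraus_app, sum_dilation_mul_mul_conjTranspose]; rfl⟩⟩

def HasPureBlock (ψ : Fin d → ℂ) (σ : Matrix (Fin (d + d)) (Fin (d + d)) ℂ) : Prop :=
  ∃ z : ℝ, 0 < z ∧ ∃ γ, σ = blockDiag (z • vecMulVec ψ (star ψ)) γ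

theorem hasPureBlock_rho0 : HasPureBlock (Pi.single 0 1) (rho0 ((d + 1) + (d + 1))) := by
  refine ⟨1, one_pos, 0, ?_⟩
  ext j l
  obtain ⟨j, rfl⟩ := finSumFinEquiv.surjective j
  obtain ⟨l, rfl⟩ := finSumFinEquiv.surjective l
  simp only [rho0, blockDiag, reindex_apply, submatrix_apply, of_apply, Equiv.symm_apply_apply]
  rcases j with j | j <;> rcases l with l | l <;>
    simp only [finSumFinEquiv_apply_left, finSumFinEquiv_apply_right, Fin.val_castAdd,
      Fin.val_natAdd, fromBlocks_apply₁₁, fromBlocks_apply₁₂, fromBlocks_apply₂₁,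
      fromBlocks_apply₂₂]
  · simp only [vecMulVec_apply, Pi.star_apply, one_smul, Pi.single_apply, Fin.val_eq_zero_iff]
    by_cases hj : j = 0 <;> by_cases hl : l = 0 <;> simp [hj, hl]
  all_goals simp

theorem HasPureBlock.ofMatrix_app {ψ : Fin d → ℂ} {σ} (h : HasPureBlock ψ σ)
    (M : Matrix (Fin d) (Fin d) ℂ) : HasPureBlock (M *ᵥ ψ) ((ofMatrix M).app σ) := by
  obtain ⟨z, hz, γ, rfl⟩ := h
  obtain ⟨c, hc, hM⟩ := exists_ofMatrix_app M
  obtain ⟨γ', hγ'⟩ := hM (z • vecMulVec ψ (star ψ)) γ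
  exact ⟨z * c ^ 2, by positivity, γ', by rw [hγ', smul_mul_smul_vecMulVec_mul_conjTranspose]⟩

theorem HasPureBlock.foldl_ofMatrix {α : Type*} {ψ : Fin d → ℂ} {σ} (h : HasPureBlock ψ σ)
    (M : Matrix (Fin d) (Fin d) ℂ) (l : List α) :
    HasPureBlock (M ^ l.length *ᵥ ψ) (l.foldl (fun σ _ => (ofMatrix M).app σ) σ) := by
  induction l generalizing ψ σ with
  | nil => simpa using h
  | cons a l ih => simpa [pow_succ, ← mulVec_mulVec] using ih (h.ofMatrix_app M)

theorem HasPureBlock.exists_re_apply_castAdd {ψ : Fin d → ℂ} {σ} (h : HasPureBlock ψ σ) :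
    ∃ z : ℝ, 0 < z ∧
      ∀ j, (σ (Fin.castAdd d j) (Fin.castAdd d j)).re = z * Complex.normSq (ψ j) := by
  obtain ⟨z, hz, γ, rfl⟩ := h
  exact ⟨z, hz, fun j => by simp [blockDiag, vecMulVec_apply, Complex.mul_conj]⟩

end Superop

namespace Matrix

variable (R : Type*) [CommSemiring R]

def pascal (d : ℕ) : Matrix (Fin d) (Fin d) R :=
  of fun j l => ((j : ℕ).choose l : R)

variable {R}

theorem pascal_mulVec_pow (d : ℕ) (x : R) :
    pascal R d *ᵥ (fun j => x ^ (j : ℕ)) = fun j : Fin d => (x + 1) ^ (j : ℕ) := by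
  funext j
  simp only [mulVec, dotProduct, pascal, of_apply, add_pow, one_pow, mul_one]
  rw [Fin.sum_univ_eq_sum_range (fun l => ((j : ℕ).choose l : R) * x ^ l) d]
  refine (Finset.sum_subset (Finset.range_subset_range.2 j.isLt) fun l _ hl => ?_).symm.trans
    (Finset.sum_congr rfl fun l _ => mul_comm _ _)
  rw [Nat.choose_eq_zero_of_lt (by simpa using hl), Nat.cast_zero, zero_mul]

theorem pascal_pow_mulVec_single_zero (d n : ℕ) :
    pascal R (d + 1) ^ n *ᵥ Pi.single 0 1 = fun j : Fin (d + 1) => (n : R) ^ (j : ℕ) := by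
  induction n with
  | zero =>
    funext j
    rcases Fin.eq_zero_or_eq_succ j with rfl | ⟨j, rfl⟩ <;> simp
  | succ n ih => rw [pow_succ', ← mulVec_mulVec, ih, pascal_mulVec_pow, Nat.cast_succ]

theorem pascal_mulVec_apply_zero {d : ℕ} (v : Fin (d + 2) → R) :
    (pascal R (d + 2) *ᵥ v) 0 = v 0 := by
  simp [mulVec, dotProduct, pascal, Fin.sum_univ_succ]

theorem pascal_mulVec_apply_one {d : ℕ} (v : Fin (d + 2) → R) :
    (pascal R (d + 2) *ᵥ v) 1 = v 0 + v 1 := by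
  simp [mulVec, dotProduct, pascal, Fin.sum_univ_succ, Nat.choose_eq_zero_of_lt]

theorem pascal_pow_mulVec_apply_zero {d : ℕ} (v : Fin (d + 2) → R) (n : ℕ) :
    (pascal R (d + 2) ^ n *ᵥ v) 0 = v 0 := by
  induction n with
  | zero => simp
  | succ n ih => rw [pow_succ', ← mulVec_mulVec, pascal_mulVec_apply_zero, ih]

theorem pascal_pow_mulVec_apply_one {d : ℕ} (v : Fin (d + 2) → R) (n : ℕ) :
    (pascal R (d + 2) ^ n *ᵥ v) 1 = n * v 0 + v 1 := by
  induction n with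
  | zero => simp
  | succ n ih =>
    rw [pow_succ', ← mulVec_mulVec, pascal_mulVec_apply_one, pascal_pow_mulVec_apply_zero, ih]
    push_cast
    ring

end Matrix

namespace MAPostQFA

open Superop

def upolyCent (k : ℕ) : Matrix (Fin (k + 2)) (Fin (k + 2)) ℂ :=
  single 0 0 1 - single 1 (Fin.last k).castSucc 1

theorem upolyCent_mulVec_apply_zero (k : ℕ) (v : Fin (k + 2) → ℂ) :
    (upolyCent k *ᵥ v) 0 = v 0 := by
  simp [upolyCent, sub_mulVec, single_mulVec]

theorem upolyCent_mulVec_apply_one (k : ℕ) (v : Fin (k + 2) → ℂ) :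
    (upolyCent k *ᵥ v) 1 = -v (Fin.last k).castSucc := by
  simp [upolyCent, sub_mulVec, single_mulVec]

noncomputable def upolyDollar (k : ℕ) (ε : ℝ) : Matrix (Fin (k + 2)) (Fin (k + 2)) ℂ :=
  diagonal (Function.update 1 0 (ε : ℂ))

noncomputable def upoly (k : ℕ) (ε : ℝ) : MAPostQFA Unit where
  m := (k + 2) + (k + 2)
  Eopen := ofMatrix 1
  Eclose := ofMatrix 1
  Ecent := ofMatrix (upolyCent k)
  Edollar := ofMatrix (upolyDollar k ε)
  Esym _ := ofMatrix (pascal ℂ (k + 2))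
  Qacc := {Fin.castAdd (k + 2) 0}
  Qrej := {Fin.castAdd (k + 2) 1}
  disj := by simp [Fin.ext_iff]

theorem upoly_finalRho (k : ℕ) (ε : ℝ) (i n : ℕ) :
    ∃ w : Fin (k + 2) → ℂ, w 0 = ε ∧ w 1 = n - (i : ℂ) ^ k ∧
      HasPureBlock w ((upoly k ε).finalRho (List.replicate i ()) (List.replicate n ())) := by
  have hcert := (hasPureBlock_rho0.ofMatrix_app 1).foldl_ofMatrix (pascal ℂ (k + 2))
    (List.replicate i ())
  have hinput := ((hcert.ofMatrix_app 1).ofMatrix_app (upolyCent k)).foldl_ofMatrix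
    (pascal ℂ (k + 2)) (List.replicate n ())
  refine ⟨_, ?_, ?_, hinput.ofMatrix_app (upolyDollar k ε)⟩
  · simp only [upolyDollar, mulVec_diagonal, Function.update_self, pascal_pow_mulVec_apply_zero,
      upolyCent_mulVec_apply_zero, one_mulVec, pascal_pow_mulVec_single_zero]
    simp
  · simp only [upolyDollar, mulVec_diagonal, Function.update_of_ne one_ne_zero,
      pascal_pow_mulVec_apply_one, upolyCent_mulVec_apply_zero, upolyCent_mulVec_apply_one,
      one_mulVec, pascal_pow_mulVec_single_zero]
    simp [sub_eq_add_neg]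

theorem upoly_weights (k : ℕ) (ε : ℝ) (i n : ℕ) :
    ∃ z : ℝ, 0 < z ∧
      (upoly k ε).aPr (List.replicate i ()) (List.replicate n ()) = z * ε ^ 2 ∧
      (upoly k ε).rPr (List.replicate i ()) (List.replicate n ()) = z * ((n : ℝ) - i ^ k) ^ 2 := by
  obtain ⟨w, hw0, hw1, hw⟩ := upoly_finalRho k ε i n
  obtain ⟨z, hz, hdiag⟩ := hw.exists_re_apply_castAdd
  have hw1' : w 1 = ((n - i ^ k : ℝ) : ℂ) := by push_cast; exact hw1
  refine ⟨z, hz, ?_, ?_⟩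
  · refine (Finset.sum_singleton _ _).trans ?_
    rw [hdiag, hw0, Complex.normSq_ofReal, sq]
  · refine (Finset.sum_singleton _ _).trans ?_
    rw [hdiag, hw1', Complex.normSq_ofReal, sq]

end MAPostQFA

theorem one_sub_le_div_sq_add {ε D : ℝ} (hε : 0 < ε) (hD : 1 ≤ D) :
    1 - ε ≤ D / (ε ^ 2 + D) := by
  rw [le_div_iff₀ (by positivity)]
  nlinarith [mul_pos hε hε]

theorem one_le_sq_sub_of_ne {a b : ℕ} (h : a ≠ b) : 1 ≤ ((a : ℝ) - b) ^ 2 := by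
  have : (1 : ℤ) ≤ |(a : ℤ) - b| := Int.one_le_abs (sub_ne_zero.2 (by exact_mod_cast h))
  rw [one_le_sq_iff_one_le_abs]
  exact_mod_cast this

theorem mapostqfa_upoly_general (k : ℕ) (ε : ℝ) (hε0 : 0 < ε) :
    ∃ M : MAPostQFA Unit,
      (∀ i n : ℕ,
        0 < M.aPr (List.replicate i ()) (List.replicate n ()) +
            M.rPr (List.replicate i ()) (List.replicate n ())) ∧
      (∀ i : ℕ, 1 - ε ≤ M.accProb (List.replicate i ()) (List.replicate (i ^ k) ())) ∧
      (∀ n : ℕ, (¬ ∃ i : ℕ, n = i ^ k) → ∀ i : ℕ,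
        1 - ε ≤ M.rejProb (List.replicate i ()) (List.replicate n ())) := by
  refine ⟨MAPostQFA.upoly k ε, fun i n => ?_, fun i => ?_, fun n hn i => ?_⟩
  · obtain ⟨z, hz, ha, hr⟩ := MAPostQFA.upoly_weights k ε i n
    rw [ha, hr]
    positivity
  · obtain ⟨z, hz, ha, hr⟩ := MAPostQFA.upoly_weights k ε i (i ^ k)
    rw [MAPostQFA.accProb, ha, hr, Nat.cast_pow, sub_self, zero_pow two_ne_zero, mul_zero,
      add_zero, div_self (by positivity)]
    linarith
  · obtain ⟨z, hz, ha, hr⟩ := MAPostQFA.upoly_weights k ε i n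
    rw [MAPostQFA.rejProb, ha, hr, ← mul_add, mul_div_mul_left _ _ hz.ne']
    exact one_sub_le_div_sq_add hε0 (mod_cast one_le_sq_sub_of_ne fun h => hn ⟨i, h⟩)

/-- for every `k ≥ 2` and `0 < ε < 1/2` there is a unary MA-PostQFA verifying
`UPOLY(k) = { a^(i^k) }` with bounded error, using certificates of length `n^(1/k)` for
members. -/
theorem mapostqfa_upoly (k : ℕ) (hk : 2 ≤ k) (ε : ℝ) (hε0 : 0 < ε) (hε : ε < 1 / 2) :
    ∃ M : MAPostQFA Unit,
      (∀ i n : ℕ,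
        0 < M.aPr (List.replicate i ()) (List.replicate n ()) +
            M.rPr (List.replicate i ()) (List.replicate n ())) ∧
      (∀ i : ℕ, 1 - ε ≤ M.accProb (List.replicate i ()) (List.replicate (i ^ k) ())) ∧
      (∀ n : ℕ, (¬ ∃ i : ℕ, n = i ^ k) → ∀ i : ℕ,
        1 - ε ≤ M.rejProb (List.replicate i ()) (List.replicate n ())) :=
  mapostqfa_upoly_general k ε hε0
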